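/- arXiv:1912.06623 — 5 statements merged into one kernel-verified Lean document; each statement's English description precedes it below -/
import Mathlib

section
/- Let Ω ⊂ ℝⁿ be open and convex, u : Ω → ℝ twice differentiable, r₀ ∈ (0,1), and let Z(x,y) = u(r₀x+(1-r₀)y) - r₀u(x) - (1-r₀)u(y). If (x₀,y₀) is a local minimum of Z, then at z₀ = r₀x₀+(1-r₀)y₀ one has D²u(z₀) ≥ r₀ D²u(x₀) + (1-r₀) D²u(y₀) in the sense of quadratic forms, i.e., for every vector v ∈ ℝⁿ, vᵀD²u(z₀)v ≥ r₀ vᵀD²u(x₀)v + (1-r₀) vᵀD²u(y₀)v. -/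
/-!
Along the diagonal direction `(v, v)` the concavity function restricts to
`t ↦ u(z₀ + t v) - r₀ u(x₀ + t v) - (1 - r₀) u(y₀ + t v)`, which has a local minimum at `0`.
Its second derivative there, `D²u(z₀)(v,v) - r₀ D²u(x₀)(v,v) - (1 - r₀) D²u(y₀)(v,v)`, is
therefore nonnegative by the one-variable second derivative test.
-/

open Filter Topology

theorem IsLocalMin.deriv_deriv_nonneg {f : ℝ → ℝ} {a : ℝ} (hmin : IsLocalMin f a)
    (hf : ContinuousAt f a) : 0 ≤ deriv (deriv f) a := by
  by_contra! hneg
  have hconst : f =ᶠ[𝓝 a] fun _ ↦ f a :=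
    ((isLocalMax_of_deriv_deriv_neg hneg hmin.deriv_eq_zero hf).and hmin).mono
      fun _ h ↦ le_antisymm h.1 h.2
  simp [hconst.deriv.deriv_eq] at hneg

theorem IsLocalMin.nonneg_of_hasDerivAt_of_hasDerivAt {f f' : ℝ → ℝ} {a c : ℝ}
    (hmin : IsLocalMin f a) (hf : ∀ᶠ t in 𝓝 a, HasDerivAt f (f' t) t)
    (hf' : HasDerivAt f' c a) : 0 ≤ c := by
  have hderiv : deriv f =ᶠ[𝓝 a] f' := hf.mono fun _ h ↦ h.deriv
  rw [← (hf'.congr_of_eventuallyEq hderiv).deriv]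
  exact hmin.deriv_deriv_nonneg hf.self_of_nhds.continuousAt

section Line

variable {E F : Type*} [NormedAddCommGroup E] [NormedSpace ℝ E]
  [NormedAddCommGroup F] [NormedSpace ℝ F] {u : E → F} {p v : E}

theorem DifferentiableAt.hasDerivAt_comp_add_smul {t : ℝ}
    (hu : DifferentiableAt ℝ u (p + t • v)) :
    HasDerivAt (fun s : ℝ ↦ u (p + s • v)) (fderiv ℝ u (p + t • v) v) t := by
  have hline : HasDerivAt (fun s : ℝ ↦ p + s • v) v t := by
    simpa using ((hasDerivAt_id t).smul_const v).const_add p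
  exact hu.hasFDerivAt.comp_hasDerivAt t hline

theorem Filter.Eventually.comp_add_smul {P : E → Prop} (h : ∀ᶠ y in 𝓝 p, P y) (v : E) :
    ∀ᶠ t in 𝓝 (0 : ℝ), P (p + t • v) :=
  (Continuous.tendsto' (by fun_prop) 0 p (by simp)).eventually h

theorem eventually_hasDerivAt_comp_add_smul (hu : ∀ᶠ y in 𝓝 p, DifferentiableAt ℝ u y) (v : E) :
    ∀ᶠ t in 𝓝 (0 : ℝ), HasDerivAt (fun s : ℝ ↦ u (p + s • v)) (fderiv ℝ u (p + t • v) v) t :=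
  (hu.comp_add_smul v).mono fun _ h ↦ h.hasDerivAt_comp_add_smul

theorem DifferentiableAt.hasDerivAt_fderiv_comp_add_smul (hu : DifferentiableAt ℝ (fderiv ℝ u) p)
    (v : E) : HasDerivAt (fun s : ℝ ↦ fderiv ℝ u (p + s • v) v)
      (fderiv ℝ (fun y ↦ fderiv ℝ u y v) p v) 0 := by
  have hdiff : DifferentiableAt ℝ (fun y ↦ fderiv ℝ u y v) (p + (0 : ℝ) • v) := by
    simpa using hu.clm_apply (differentiableAt_const v)
  simpa using hdiff.hasDerivAt_comp_add_smul

end Line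

section Concavity

variable {E : Type*} [NormedAddCommGroup E] [NormedSpace ℝ E]

def concavityFunction (u : E → ℝ) (r : ℝ) (q : E × E) : ℝ :=
  u (r • q.1 + (1 - r) • q.2) - r * u q.1 - (1 - r) * u q.2

theorem IsLocalMin.convexComb_fderiv_fderiv_le {Ω : Set E} (hΩ : IsOpen Ω) {u : E → ℝ}
    (hu : ∀ x ∈ Ω, DifferentiableAt ℝ u x)
    (hu2 : ∀ x ∈ Ω, DifferentiableAt ℝ (fderiv ℝ u) x) {r : ℝ} {x₀ y₀ : E}
    (hx₀ : x₀ ∈ Ω) (hy₀ : y₀ ∈ Ω) (hz₀ : r • x₀ + (1 - r) • y₀ ∈ Ω)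
    (hmin : IsLocalMin (concavityFunction u r) (x₀, y₀)) (v : E) :
    r * fderiv ℝ (fun y ↦ fderiv ℝ u y v) x₀ v + (1 - r) * fderiv ℝ (fun y ↦ fderiv ℝ u y v) y₀ v
      ≤ fderiv ℝ (fun y ↦ fderiv ℝ u y v) (r • x₀ + (1 - r) • y₀) v := by
  set z₀ := r • x₀ + (1 - r) • y₀
  have hline : ∀ p ∈ Ω, ∀ᶠ t in 𝓝 (0 : ℝ),
      HasDerivAt (fun s : ℝ ↦ u (p + s • v)) (fderiv ℝ u (p + t • v) v) t := fun p hp ↦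
    eventually_hasDerivAt_comp_add_smul (eventually_of_mem (hΩ.mem_nhds hp) hu) v
  have hdiag : ∀ t : ℝ, r • (x₀ + t • v) + (1 - r) • (y₀ + t • v) = z₀ + t • v := fun t ↦ by
    simp only [z₀]; module
  have hmin_diag : IsLocalMin
      (fun t : ℝ ↦ u (z₀ + t • v) - r * u (x₀ + t • v) - (1 - r) * u (y₀ + t • v)) 0 := by
    have := IsLocalMin.comp_continuous (g := fun t : ℝ ↦ (x₀ + t • v, y₀ + t • v)) (b := 0)
      (by simpa only [zero_smul, add_zero] using hmin) (by fun_prop)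
    simpa only [Function.comp_def, concavityFunction, hdiag] using this
  have hsecond := hmin_diag.nonneg_of_hasDerivAt_of_hasDerivAt
    (by
      filter_upwards [hline z₀ hz₀, hline x₀ hx₀, hline y₀ hy₀] with t hz hx hy
      exact (hz.sub (hx.const_mul r)).sub (hy.const_mul (1 - r)))
    (((hu2 z₀ hz₀).hasDerivAt_fderiv_comp_add_smul v).sub
      (((hu2 x₀ hx₀).hasDerivAt_fderiv_comp_add_smul v).const_mul r) |>.sub
      (((hu2 y₀ hy₀).hasDerivAt_fderiv_comp_add_smul v).const_mul (1 - r)))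
  linarith

end Concavity

/-- At a local minimum `(x₀,y₀)` of the concavity function
`Z(x,y) = u(r₀x+(1-r₀)y) - r₀u(x) - (1-r₀)u(y)`, one has
`D²u(z₀) ≥ r₀ D²u(x₀) + (1-r₀) D²u(y₀)` as quadratic forms,
where `z₀ = r₀x₀+(1-r₀)y₀`. -/
theorem stmt3 {n : ℕ}
    (Ω : Set (EuclideanSpace ℝ (Fin n)))
    (hΩo : IsOpen Ω) (hΩc : Convex ℝ Ω)
    (u : EuclideanSpace ℝ (Fin n) → ℝ)
    (hud : ∀ x ∈ Ω, DifferentiableAt ℝ u x)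
    (hud2 : ∀ x ∈ Ω, DifferentiableAt ℝ (fun y => fderiv ℝ u y) x)
    (r₀ : ℝ) (hr₀ : r₀ ∈ Set.Ioo (0:ℝ) 1)
    (x₀ y₀ : EuclideanSpace ℝ (Fin n)) (hx₀ : x₀ ∈ Ω) (hy₀ : y₀ ∈ Ω)
    (hmin : IsLocalMin
      (fun q : EuclideanSpace ℝ (Fin n) × EuclideanSpace ℝ (Fin n) =>
        u (r₀ • q.1 + (1 - r₀) • q.2) - r₀ * u q.1 - (1 - r₀) * u q.2)
      (x₀, y₀)) :
    ∀ v : EuclideanSpace ℝ (Fin n),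
      r₀ * fderiv ℝ (fun y => fderiv ℝ u y v) x₀ v
        + (1 - r₀) * fderiv ℝ (fun y => fderiv ℝ u y v) y₀ v
      ≤ fderiv ℝ (fun y => fderiv ℝ u y v) (r₀ • x₀ + (1 - r₀) • y₀) v := by
  intro v
  have hz₀ : r₀ • x₀ + (1 - r₀) • y₀ ∈ Ω :=
    hΩc hx₀ hy₀ hr₀.1.le (sub_nonneg.mpr hr₀.2.le) (add_sub_cancel r₀ 1)
  exact hmin.convexComb_fderiv_fderiv_le hΩo hud hud2 hx₀ hy₀ hz₀ v
end

section
/- Let A_x, A_y, A_z be positive definite symmetric matrices on a subspace, and r₀ ∈ (0,1). Suppose that for all endomorphisms â, b̂ of the subspace, with ĉ := r₀â + (1-r₀)b̂, one has ĉᵀ A_z ĉ ≤ r₀ âᵀ A_x â + (1-r₀) b̂ᵀ A_y b̂ (as quadratic forms). Then r₀ A_x⁻¹ + (1-r₀) A_y⁻¹ ≤ A_z⁻¹ in the Loewner order. -/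
/-!
Take `â = A_x⁻¹`, `b̂ = A_y⁻¹`: then `ĉ = C := r₀ A_x⁻¹ + (1 - r₀) A_y⁻¹` and the hypothesis
collapses to `C A_z C ≤ C`. Completing the square,
`A_z⁻¹ - C = (A_z⁻¹ - C) A_z (A_z⁻¹ - C) + (C - C A_z C)`, a sum of two positive semidefinite
matrices.
-/

open Matrix

namespace Matrix

variable {m K : Type*} [Fintype m] [DecidableEq m] [Field K] [StarRing K] {A C : Matrix m m K}

theorem IsHermitian.conjTranspose_inv_mul_mul_inv (hA : A.IsHermitian) (hu : IsUnit A) :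
    A⁻¹ᴴ * A * A⁻¹ = A⁻¹ := by
  rw [conjTranspose_nonsing_inv, hA.eq, nonsing_inv_mul _ ((isUnit_iff_isUnit_det A).mp hu),
    Matrix.one_mul]

theorem inv_sub_eq_conjTranspose_mul_mul_add (hA : A.IsHermitian) (hu : IsUnit A)
    (hC : C.IsHermitian) :
    A⁻¹ - C = (A⁻¹ - C)ᴴ * A * (A⁻¹ - C) + (C - C * A * C) := by
  have hdet := (isUnit_iff_isUnit_det A).mp hu
  rw [conjTranspose_sub, hC.eq, conjTranspose_nonsing_inv, hA.eq]
  simp only [Matrix.sub_mul, Matrix.mul_sub, nonsing_inv_mul _ hdet, mul_nonsing_inv _ hdet,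
    Matrix.one_mul, Matrix.mul_one, Matrix.mul_assoc]
  abel

theorem PosSemidef.inv_sub_of_sub_mul_mul [PartialOrder K] [IsOrderedRing K]
    (hA : A.PosSemidef) (hu : IsUnit A) (hC : C.IsHermitian)
    (h : (C - C * A * C).PosSemidef) : (A⁻¹ - C).PosSemidef := by
  rw [inv_sub_eq_conjTranspose_mul_mul_add hA.isHermitian hu hC]
  exact (hA.conjTranspose_mul_mul_same _).add h

end Matrix

theorem stmt6_general {n : ℕ}
    (Ax Ay Az : Matrix (Fin n) (Fin n) ℝ)
    (hAx : Ax.PosDef) (hAy : Ay.PosDef) (hAz : Az.PosDef)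
    (r₀ : ℝ)
    (h : ∀ a b : Matrix (Fin n) (Fin n) ℝ,
      ((r₀ • ((a)ᵀ * Ax * a) + (1 - r₀) • ((b)ᵀ * Ay * b))
        - ((r₀ • a + (1 - r₀) • b)ᵀ * Az * (r₀ • a + (1 - r₀) • b))).PosSemidef) :
    (Az⁻¹ - (r₀ • Ax⁻¹ + (1 - r₀) • Ay⁻¹)).PosSemidef := by
  have hC : (r₀ • Ax⁻¹ + (1 - r₀) • Ay⁻¹).IsHermitian :=
    (hAx.isHermitian.inv.smul (IsSelfAdjoint.all _)).add
      (hAy.isHermitian.inv.smul (IsSelfAdjoint.all _))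
  refine hAz.posSemidef.inv_sub_of_sub_mul_mul hAz.isUnit hC ?_
  simpa only [← conjTranspose_eq_transpose_of_trivial, hC.eq,
    hAx.isHermitian.conjTranspose_inv_mul_mul_inv hAx.isUnit,
    hAy.isHermitian.conjTranspose_inv_mul_mul_inv hAy.isUnit] using h Ax⁻¹ Ay⁻¹

/-- The optimized second variation inequality: if for all endomorphisms
`â, b̂` (with `ĉ = r₀â + (1-r₀)b̂`) one has
`ĉᵀ A_z ĉ ≤ r₀ âᵀ A_x â + (1-r₀) b̂ᵀ A_y b̂`, then
`r₀ A_x⁻¹ + (1-r₀) A_y⁻¹ ≤ A_z⁻¹` in the Loewner order. -/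
theorem stmt6 {n : ℕ}
    (Ax Ay Az : Matrix (Fin n) (Fin n) ℝ)
    (hAx : Ax.PosDef) (hAy : Ay.PosDef) (hAz : Az.PosDef)
    (r₀ : ℝ) (hr₀ : r₀ ∈ Set.Ioo (0:ℝ) 1)
    (h : ∀ a b : Matrix (Fin n) (Fin n) ℝ,
      ((r₀ • ((a)ᵀ * Ax * a) + (1 - r₀) • ((b)ᵀ * Ay * b))
        - ((r₀ • a + (1 - r₀) • b)ᵀ * Az * (r₀ • a + (1 - r₀) • b))).PosSemidef) :
    (Az⁻¹ - (r₀ • Ax⁻¹ + (1 - r₀) • Ay⁻¹)).PosSemidef :=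
  stmt6_general Ax Ay Az hAx hAy hAz r₀ h
end

section
/- Let Ω_t, t < T, be a family of convex subsets of ℝⁿ⁺¹ that is monotone decreasing in t (s < t implies Ω_t ⊂ Ω_s) and let u be the arrival time, u(p) = sup{t : p ∈ Ω_t}. If u is continuous on the interior and for each t the superlevel set {u > t} equals the interior of Ω_t and is convex, and if for every fixed t₀ the function w_{t₀}(q) := √(2(u(q) - t₀)) is concave on {u > t₀}, then u itself is concave on the set where u > -∞, provided u > -∞ everywhere and all superlevel sets are bounded. -/
/-!
The domain is convex as the increasing union of the convex sets `{u > t}`. Squaring the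
concavity inequality of `√(u - t)` between `x` and `y` gives
`u (a • x + b • y) ≥ a * u x + b * u y - a * b * (√(u x - t) - √(u y - t)) ^ 2`,
a finite-difference form of the Hessian bound `D²u ≤ Du ⊗ Du / (2 (u - t))`.
The error term is at most `a * b * (u x - u y) ^ 2 / (u x + u y - 2 * t)`, which tends to `0`
as `t → -∞`.
-/

open Bornology Filter Topology

lemma add_mul_sub_sq_add_mul_sqrt {a b α β : ℝ} (hab : a + b = 1) (hα : 0 ≤ α) (hβ : 0 ≤ β) :
    a * α + b * β - (a * √α + b * √β) ^ 2 = a * b * (√α - √β) ^ 2 := by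
  linear_combination
    -(a * α + b * β) * hab - a * (a + b) * Real.sq_sqrt hα - b * (a + b) * Real.sq_sqrt hβ

lemma sq_sqrt_sub_sqrt_le {α β : ℝ} (hα : 0 ≤ α) (hβ : 0 ≤ β) (hαβ : 0 < α + β) :
    (√α - √β) ^ 2 ≤ (α - β) ^ 2 / (α + β) := by
  have hsq : α + β ≤ (√α + √β) ^ 2 := by
    nlinarith [Real.sq_sqrt hα, Real.sq_sqrt hβ, Real.sqrt_nonneg α, Real.sqrt_nonneg β]
  have hprod : (√α - √β) ^ 2 * (√α + √β) ^ 2 = (α - β) ^ 2 := by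
    linear_combination (√α ^ 2 - √β ^ 2 + α - β) * (Real.sq_sqrt hα - Real.sq_sqrt hβ)
  rw [le_div_iff₀ hαβ, ← hprod]
  exact mul_le_mul_of_nonneg_left hsq (sq_nonneg _)

lemma sub_mul_div_le_of_add_mul_sqrt_sub_le_sqrt_sub {a b t X Y Z : ℝ} (ha : 0 ≤ a)
    (hb : 0 ≤ b) (hab : a + b = 1) (hX : t < X) (hY : t < Y) (hZ : t ≤ Z)
    (h : a * √(X - t) + b * √(Y - t) ≤ √(Z - t)) :
    a * X + b * Y - a * b * ((X - Y) ^ 2 / (X + Y - 2 * t)) ≤ Z := by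
  have hsq : (a * √(X - t) + b * √(Y - t)) ^ 2 ≤ Z - t := by
    rw [← Real.sq_sqrt (sub_nonneg.2 hZ)]
    exact pow_le_pow_left₀ (by positivity) h 2
  have hdefect := add_mul_sub_sq_add_mul_sqrt hab (sub_nonneg.2 hX.le) (sub_nonneg.2 hY.le)
  have hbound : (√(X - t) - √(Y - t)) ^ 2 ≤ (X - Y) ^ 2 / (X + Y - 2 * t) := by
    have := sq_sqrt_sub_sqrt_le (sub_nonneg.2 hX.le) (sub_nonneg.2 hY.le) (by linarith)
    convert this using 3 <;> ring
  have hmean : a * (X - t) + b * (Y - t) = a * X + b * Y - t := by linear_combination -t * hab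
  nlinarith [mul_le_mul_of_nonneg_left hbound (mul_nonneg ha hb)]

lemma tendsto_const_div_sub_two_mul_atBot (c k : ℝ) :
    Tendsto (fun t : ℝ => c / (k - 2 * t)) atBot (𝓝 0) :=
  tendsto_const_nhds.div_atTop <| tendsto_atBot_atTop.mpr fun b =>
    ⟨(k - b) / 2, fun t ht => by linarith⟩

theorem concaveOn_of_forall_concaveOn_sqrt_sub {E : Type*} [AddCommMonoid E] [SMul ℝ E]
    {D : Set E} {u : E → ℝ} (h : ∀ t, ConcaveOn ℝ {p ∈ D | t < u p} fun q => √(u q - t)) :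
    ConcaveOn ℝ D u := by
  have hlevel {x y : E} (hx : x ∈ D) (hy : y ∈ D) {t : ℝ} (ht : t < min (u x) (u y)) :
      x ∈ {p ∈ D | t < u p} ∧ y ∈ {p ∈ D | t < u p} :=
    ⟨⟨hx, ht.trans_le (min_le_left _ _)⟩, ⟨hy, ht.trans_le (min_le_right _ _)⟩⟩
  refine ⟨fun x hx y hy a b ha hb hab => ?_, fun x hx y hy a b ha hb hab => ?_⟩
  · obtain ⟨hxt, hyt⟩ := hlevel hx hy (sub_one_lt (min (u x) (u y)))
    exact ((h _).1 hxt hyt ha hb hab).1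
  · have hlim : Tendsto (fun t => a * u x + b * u y -
        a * b * ((u x - u y) ^ 2 / (u x + u y - 2 * t))) atBot (𝓝 (a • u x + b • u y)) := by
      simpa using tendsto_const_nhds.sub
        ((tendsto_const_div_sub_two_mul_atBot ((u x - u y) ^ 2) (u x + u y)).const_mul (a * b))
    refine le_of_tendsto hlim ?_
    filter_upwards [eventually_lt_atBot (min (u x) (u y))] with t ht
    obtain ⟨hxt, hyt⟩ := hlevel hx hy ht
    have hzt := (h t).1 hxt hyt ha hb hab
    exact sub_mul_div_le_of_add_mul_sqrt_sub_le_sqrt_sub ha hb hab hxt.2 hyt.2 hzt.2.le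
      ((h t).2 hxt hyt ha hb hab)

lemma concaveOn_sqrt_of_concaveOn_sqrt_two_mul {E : Type*} [AddCommMonoid E] [SMul ℝ E]
    {s : Set E} {f : E → ℝ} (h : ConcaveOn ℝ s fun q => √(2 * f q)) :
    ConcaveOn ℝ s fun q => √(f q) := by
  refine (h.smul (inv_nonneg.2 (Real.sqrt_nonneg 2))).congr fun q _ => ?_
  simp only [Real.sqrt_mul zero_le_two, smul_eq_mul,
    inv_mul_cancel_left₀ (Real.sqrt_ne_zero'.2 two_pos)]

theorem stmt8_general {n : ℕ}
    (u : EuclideanSpace ℝ (Fin (n + 1)) → ℝ)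
    (D : Set (EuclideanSpace ℝ (Fin (n + 1))))
    (hw : ∀ t₀ : ℝ, ConcaveOn ℝ {p ∈ D | t₀ < u p}
      (fun q => Real.sqrt (2 * (u q - t₀)))) :
    ConcaveOn ℝ D u :=
  concaveOn_of_forall_concaveOn_sqrt_sub fun t =>
    concaveOn_sqrt_of_concaveOn_sqrt_two_mul (f := fun q => u q - t) (hw t)

/-- Ancient-solutions step: if the arrival time `u` of a monotone family of
convex sets has convex bounded superlevel sets equal to the interiors of the
`Ω t`, and `√(2(u - t₀))` is concave on `{u > t₀}` for every `t₀`, then `u`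
itself is concave on its domain. -/
theorem stmt8 {n : ℕ}
    (T : ℝ) (Ω : ℝ → Set (EuclideanSpace ℝ (Fin (n + 1))))
    (u : EuclideanSpace ℝ (Fin (n + 1)) → ℝ)
    (D : Set (EuclideanSpace ℝ (Fin (n + 1))))
    (hD : D = ⋃ t ∈ Set.Iio T, interior (Ω t))
    (hconv : ∀ t < T, Convex ℝ (Ω t))
    (hmono : ∀ s t : ℝ, s < t → t < T → Ω t ⊆ Ω s)
    (hu : ∀ p ∈ D, u p = sSup {t | t < T ∧ p ∈ Ω t})
    (hcont : ContinuousOn u D)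
    (hlevel : ∀ t < T, {p ∈ D | t < u p} = interior (Ω t) ∧
      Convex ℝ {p ∈ D | t < u p})
    (hbdd : ∀ t : ℝ, IsBounded {p ∈ D | t < u p})
    (hw : ∀ t₀ : ℝ, ConcaveOn ℝ {p ∈ D | t₀ < u p}
      (fun q => Real.sqrt (2 * (u q - t₀)))) :
    ConcaveOn ℝ D u :=
  stmt8_general u D hw
end

section
/- Let u be twice differentiable with u > t₀ near a point p, and suppose in a suitable orthonormal basis (e₁,…,e_{n+1}) with e_{n+1} = ν the Hessian of u at p has block form D²u = [[-A/H, ∇H/H²],[∇H/H², -∂_tH/H³]] where H > 0. Set w = √(2(u - t₀)). Then for a vector V = λ(V^⊤ - Hν) with V^⊤ ∈ span(e₁,…,eₙ), one has w·D²w(V,V) = -(λ²/H)(∂_tH + H/(2(t-t₀)) + 2∇_{V^⊤}H + A(V^⊤,V^⊤)), where t = u(p). Consequently, D²w(p) ≤ 0 holds if and only if A(V^⊤,V^⊤) ≥ 0 for all tangent V^⊤ and ∂_tH + 2∇_VH + A(V,V) + H/(2(t-t₀)) ≥ 0 for all tangent V. -/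
/-!
Since `Du = -ν/H`, the correction `Du ⊗ Du / w²` only touches the `νν` entry of `D²u`, where it
replaces `∂ₜH` by `∂ₜH + H/w² = ∂ₜH + H/(2(t-t₀))`; so `w D²w` has the same block form as `D²u`.
Its quadratic form is `-A(V,V)/H` on tangent vectors and `-(λ²/H)` times the Harnack quantity on
`λ(V - Hν)`. Every vector is of one of these two kinds, so, as `H > 0`, `w D²w ≤ 0` is equivalent
to the two inequalities.
-/

open Matrix

/-- The block Hessian `D²u` of the arrival time of a mean curvature flow, in
an orthonormal basis `(e₁,…,eₙ,ν)`. -/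
noncomputable def hessArrival {n : ℕ} (A : Matrix (Fin n) (Fin n) ℝ) (gradH : Fin n → ℝ)
    (dtH H : ℝ) : Matrix (Fin n ⊕ Unit) (Fin n ⊕ Unit) ℝ :=
  Matrix.of fun i j =>
    match i, j with
    | Sum.inl i, Sum.inl j => -(A i j) / H
    | Sum.inl i, Sum.inr _ => gradH i / H ^ 2
    | Sum.inr _, Sum.inl j => gradH j / H ^ 2
    | Sum.inr _, Sum.inr _ => -dtH / H ^ 3

theorem eq_sumElim_zero_or_eq_sumElim_smul {ι K : Type*} [Field K] {h : K} (hh : h ≠ 0)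
    (x : ι ⊕ Unit → K) :
    (∃ a, x = Sum.elim a fun _ => 0) ∨
      ∃ (l : K) (V : ι → K), x = Sum.elim (l • V) fun _ => -(l * h) := by
  by_cases hc : x (Sum.inr ()) = 0
  · exact .inl ⟨x ∘ Sum.inl, by ext (i | ⟨⟩) <;> simp [hc]⟩
  · refine .inr ⟨-x (Sum.inr ()) / h, (-h / x (Sum.inr ())) • (x ∘ Sum.inl), ?_⟩
    ext (i | ⟨⟩) <;> simp <;> field_simp

section

variable {n : ℕ} (A : Matrix (Fin n) (Fin n) ℝ) (g : Fin n → ℝ) (d H : ℝ)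

theorem hessArrival_isSymm (hA : A.IsSymm) : (hessArrival A g d H).IsSymm := by
  refine IsSymm.ext ?_
  rintro (i | i) (j | j) <;> simp [hessArrival, hA.apply]

theorem hessArrival_sub_smul_vecMulVec (hH : H ≠ 0) (s : ℝ) :
    hessArrival A g d H - (1 / s) • vecMulVec (Sum.elim (fun _ => 0) fun _ => -1 / H)
        (Sum.elim (fun _ => 0) fun _ => -1 / H) = hessArrival A g (d + H / s) H := by
  ext (i | i) (j | j) <;>
    simp only [hessArrival, Matrix.sub_apply, Matrix.smul_apply, of_apply, vecMulVec_apply,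
      Sum.elim_inl, Sum.elim_inr, mul_zero, zero_mul, smul_eq_mul, sub_zero]
  field_simp
  ring

theorem hessArrival_mulVec_sumElim (a : Fin n → ℝ) (c : ℝ) :
    hessArrival A g d H *ᵥ Sum.elim a (fun _ => c)
      = Sum.elim (-(1 / H) • (A *ᵥ a) + (c / H ^ 2) • g)
          fun _ => g ⬝ᵥ a / H ^ 2 - c * d / H ^ 3 := by
  ext (i | i) <;>
    simp [hessArrival, mulVec, dotProduct, Fintype.sum_sum_type, Finset.mul_sum, Finset.sum_div,
      neg_div] <;> ring_nf <;> congr 1 <;> exact Finset.sum_congr rfl fun _ _ => by ring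

theorem sumElim_dotProduct_hessArrival_mulVec (a : Fin n → ℝ) (c : ℝ) :
    Sum.elim a (fun _ => c) ⬝ᵥ (hessArrival A g d H *ᵥ Sum.elim a fun _ => c)
      = -(a ⬝ᵥ (A *ᵥ a)) / H + 2 * c * (g ⬝ᵥ a) / H ^ 2 - c ^ 2 * d / H ^ 3 := by
  rw [hessArrival_mulVec_sumElim, sumElim_dotProduct_sumElim, dotProduct_add, dotProduct_smul,
    dotProduct_smul, dotProduct_comm a g]
  simp only [smul_eq_mul, dotProduct_pUnit]
  ring

theorem sumElim_zero_dotProduct_hessArrival_mulVec (a : Fin n → ℝ) :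
    Sum.elim a (fun _ => 0) ⬝ᵥ (hessArrival A g d H *ᵥ Sum.elim a fun _ => 0)
      = -(a ⬝ᵥ (A *ᵥ a)) / H := by
  simp [sumElim_dotProduct_hessArrival_mulVec]

theorem sumElim_smul_dotProduct_hessArrival_mulVec (hH : H ≠ 0) (l : ℝ) (V : Fin n → ℝ) :
    Sum.elim (l • V) (fun _ => -(l * H)) ⬝ᵥ
        (hessArrival A g d H *ᵥ Sum.elim (l • V) fun _ => -(l * H))
      = -(l ^ 2 / H) * (d + 2 * (g ⬝ᵥ V) + V ⬝ᵥ (A *ᵥ V)) := by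
  rw [sumElim_dotProduct_hessArrival_mulVec, mulVec_smul, dotProduct_smul, smul_dotProduct,
    dotProduct_smul]
  simp only [smul_eq_mul]
  field_simp
  ring

theorem posSemidef_neg_hessArrival_iff (hA : A.IsSymm) (hH : 0 < H) :
    (-hessArrival A g d H).PosSemidef ↔
      (∀ V, 0 ≤ V ⬝ᵥ (A *ᵥ V)) ∧ ∀ V, 0 ≤ d + 2 * (g ⬝ᵥ V) + V ⬝ᵥ (A *ᵥ V) := by
  have hHerm : (-hessArrival A g d H).IsHermitian :=
    isHermitian_iff_isSymm.mpr (hessArrival_isSymm A g d H hA).neg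
  simp only [posSemidef_iff_dotProduct_mulVec, hHerm, true_and, star_trivial, neg_mulVec,
    dotProduct_neg, neg_nonneg]
  constructor
  · intro h
    refine ⟨fun V => ?_, fun V => ?_⟩
    · have := h (Sum.elim V fun _ => 0)
      rw [sumElim_zero_dotProduct_hessArrival_mulVec, neg_div, neg_nonpos] at this
      exact (div_le_div_iff_of_pos_right hH).mp (by rwa [zero_div])
    · have := h (Sum.elim ((1 : ℝ) • V) fun _ => -(1 * H))
      rw [sumElim_smul_dotProduct_hessArrival_mulVec A g d H hH.ne', neg_mul, neg_nonpos] at this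
      exact nonneg_of_mul_nonneg_right this (by positivity)
  · rintro ⟨hA0, hHarnack⟩ x
    rcases eq_sumElim_zero_or_eq_sumElim_smul hH.ne' x with ⟨a, rfl⟩ | ⟨l, V, rfl⟩
    · rw [sumElim_zero_dotProduct_hessArrival_mulVec, neg_div, neg_nonpos]
      exact div_nonneg (hA0 a) hH.le
    · rw [sumElim_smul_dotProduct_hessArrival_mulVec A g d H hH.ne', neg_mul, neg_nonpos]
      exact mul_nonneg (by positivity) (hHarnack V)

end

/-- Equivalence of concavity of `√(2(u-t₀))` with Hamilton's differential
Harnack inequality for mean curvature flow: with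
`w D²w = D²u - Du ⊗ Du / w²` and `Du = -ν/H`, for `V = λ(V^⊤ - Hν)` one has
`w D²w(V,V) = -(λ²/H)(∂ₜH + H/(2(t-t₀)) + 2∇_{V^⊤}H + A(V^⊤,V^⊤))`, and
`D²w ≤ 0` iff `A ≥ 0` and the Harnack quantity is nonnegative. -/
theorem stmt12 {n : ℕ}
    (A : Matrix (Fin n) (Fin n) ℝ) (hA : A.IsSymm)
    (gradH : Fin n → ℝ) (dtH : ℝ) (H : ℝ) (hH : 0 < H)
    (t t₀ : ℝ) (ht : t₀ < t)
    (w : ℝ) (hw : w = Real.sqrt (2 * (t - t₀)))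
    (du : Fin n ⊕ Unit → ℝ)
    (hdu : du = Sum.elim (fun _ => (0:ℝ)) (fun _ => -1 / H))
    (W : Matrix (Fin n ⊕ Unit) (Fin n ⊕ Unit) ℝ)
    (hW : W = hessArrival A gradH dtH H - (1 / w ^ 2) • vecMulVec du du) :
    (∀ (l : ℝ) (Vt : Fin n → ℝ),
      (Sum.elim (fun i => l * Vt i) (fun _ => -(l * H))) ⬝ᵥ
          (W *ᵥ Sum.elim (fun i => l * Vt i) (fun _ => -(l * H)))
        = -(l ^ 2 / H) * (dtH + H / (2 * (t - t₀))
            + 2 * (gradH ⬝ᵥ Vt) + Vt ⬝ᵥ (A *ᵥ Vt))) ∧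
    ((-W).PosSemidef ↔
      (∀ Vt : Fin n → ℝ, 0 ≤ Vt ⬝ᵥ (A *ᵥ Vt)) ∧
      (∀ Vt : Fin n → ℝ,
        0 ≤ dtH + 2 * (gradH ⬝ᵥ Vt) + Vt ⬝ᵥ (A *ᵥ Vt) + H / (2 * (t - t₀)))) := by
  have hw2 : w ^ 2 = 2 * (t - t₀) := by
    rw [hw, Real.sq_sqrt (by linarith)]
  rw [hdu, hessArrival_sub_smul_vecMulVec A gradH dtH H hH.ne', hw2] at hW
  subst hW
  refine ⟨fun l Vt => sumElim_smul_dotProduct_hessArrival_mulVec A gradH _ H hH.ne' l Vt, ?_⟩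
  rw [posSemidef_neg_hessArrival_iff A gradH _ H hA hH]
  congr! 3 with Vt
  ring
end

section
/- Let Ω ⊂ ℝ^{n+1} be a (possibly unbounded) convex open set, α > 0, and let u : Ω → ℝ be twice differentiable with bounded superlevel sets {u > t} for all t, such that for each t ∈ ℝ the function w_t := ((1+α)(u - t))^{1/(1+α)} is concave on {u > t}. Then for every p ∈ Ω and every t < u(p), D²u(p) ≤ α/((1+α)(u(p)-t)) · Du(p) ⊗ Du(p) in the Loewner order; taking t → -∞, D²u(p) ≤ 0, so u is concave. -/
/-!
Restrict to a line through `p` in direction `v`, where `m = (1+α)(u - t)` is positive and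
`m^β` (with `β = 1/(1+α)`) is concave. The second derivative of `m^β`, namely
`β m^(β-2) ((β-1) m'² + m m'')`, is then nonpositive, which is the bound
`m m'' ≤ (1-β) m'²`, i.e. `D²u(p)(v,v) ≤ α/((1+α)(u p - t)) (Du(p) v)²`. The right-hand side
tends to `0` as `t → -∞`, so every second directional derivative of `u` is nonpositive and `u`
is concave along each segment of the convex set `Ω`.
-/

open Bornology Set AffineMap

section OneVariable

open Filter Topology

variable {S : Set ℝ} {x : ℝ}

lemma HasDerivAt.nonpos_of_concaveOn {g g' : ℝ → ℝ} {g'' : ℝ} (hS : S ∈ 𝓝 x)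
    (hg : ConcaveOn ℝ S g) (hd : ∀ s ∈ S, HasDerivAt g (g' s) s) (hd2 : HasDerivAt g' g'' x) :
    g'' ≤ 0 := by
  have hanti : AntitoneOn g' S :=
    (hg.antitoneOn_deriv fun s hs => (hd s hs).differentiableAt).congr fun s hs => (hd s hs).deriv
  have hacc : AccPt x (𝓟 S) := by
    simpa using (PerfectSpace.univ_preperfect x (mem_univ x)).nhds_inter hS
  exact hd2.hasDerivWithinAt.nonpos_of_antitoneOn hacc hanti

lemma mul_le_of_concaveOn_rpow {m m' : ℝ → ℝ} {m'' β : ℝ} (hβ : 0 < β) (hS : S ∈ 𝓝 x)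
    (hpos : ∀ s ∈ S, 0 < m s) (hconc : ConcaveOn ℝ S fun s => m s ^ β)
    (hm : ∀ s ∈ S, HasDerivAt m (m' s) s) (hm' : HasDerivAt m' m'' x) :
    m x * m'' ≤ (1 - β) * m' x ^ 2 := by
  have hx : x ∈ S := mem_of_mem_nhds hS
  have hy : 0 < m x := hpos x hx
  have hw : ∀ s ∈ S, HasDerivAt (fun r => m r ^ β) (m' s * β * m s ^ (β - 1)) s :=
    fun s hs => (hm s hs).rpow_const (Or.inl (hpos s hs).ne')
  have hw' := (hm'.mul_const β).mul ((hm x hx).rpow_const (p := β - 1) (Or.inl hy.ne'))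
  have hnonpos := hw'.nonpos_of_concaveOn hS hconc hw
  rw [Real.rpow_sub_one hy.ne' (β - 1)] at hnonpos
  have hX : 0 < β * m x ^ (β - 1) := mul_pos hβ (Real.rpow_pos_of_pos hy _)
  have key : (m x * m'' - (1 - β) * m' x ^ 2) * (β * m x ^ (β - 1)) ≤ 0 := by
    have e : (m x * m'' - (1 - β) * m' x ^ 2) * (β * m x ^ (β - 1))
        = m x * (m'' * β * m x ^ (β - 1)
          + m' x * β * (m' x * (β - 1) * (m x ^ (β - 1) / m x))) := by
      field_simp
      ring
    rw [e]
    exact mul_nonpos_of_nonneg_of_nonpos hy.le hnonpos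
  linarith [nonpos_of_mul_nonpos_left key hX]

lemma nonpos_of_forall_lt_le_div_mul {a y c k K : ℝ} (hk : 0 < k)
    (h : ∀ t < a, y ≤ c / (k * (a - t)) * K) : y ≤ 0 := by
  have hden : Tendsto (fun t => k * (a - t)) atBot atTop :=
    (tendsto_atTop_add_const_left atBot a tendsto_neg_atBot_atTop).const_mul_atTop hk
  have hlim : Tendsto (fun t => c / (k * (a - t)) * K) atBot (𝓝 0) := by
    simpa using (tendsto_const_nhds.div_atTop hden).mul_const K
  exact ge_of_tendsto hlim ((eventually_lt_atBot a).mono h)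

end OneVariable

section Lines

open Filter Topology

variable {E : Type*} [NormedAddCommGroup E] [NormedSpace ℝ E]

lemma hasDerivAt_comp_lineMap {F : Type*} [NormedAddCommGroup F] [NormedSpace ℝ F]
    {g : E → F} {a b : E} {s : ℝ} (hg : DifferentiableAt ℝ g (lineMap a b s)) :
    HasDerivAt (fun r => g (lineMap a b r)) (fderiv ℝ g (lineMap a b s) (b - a)) s :=
  hg.hasFDerivAt.comp_hasDerivAt s hasDerivAt_lineMap

lemma concaveOn_of_forall_concaveOn_lineMap {s : Set E} {f : E → ℝ} (hs : Convex ℝ s)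
    (h : ∀ x ∈ s, ∀ y ∈ s, ConcaveOn ℝ (lineMap (k := ℝ) x y ⁻¹' s) (f ∘ lineMap x y)) :
    ConcaveOn ℝ s f := by
  refine ⟨hs, fun x hx y hy a b ha hb hab => ?_⟩
  have h0 : (0 : ℝ) ∈ lineMap (k := ℝ) x y ⁻¹' s := by simpa using hx
  have h1 : (1 : ℝ) ∈ lineMap (k := ℝ) x y ⁻¹' s := by simpa using hy
  have hb' : (lineMap x y : ℝ →ᵃ[ℝ] E) b = a • x + b • y := by
    rw [lineMap_apply_module x y b, ← hab, add_sub_cancel_right]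
  simpa [hb'] using (h x hx y hy).2 h0 h1 ha hb hab

lemma mul_fderiv_fderiv_le_of_concaveOn_rpow {U : Set E} {f : E → ℝ} {β : ℝ} {p v : E}
    (hβ : 0 < β) (hU : IsOpen U) (hp : p ∈ U) (hpos : ∀ x ∈ U, 0 < f x)
    (hconc : ConcaveOn ℝ U fun x => f x ^ β) (hd : ∀ x ∈ U, DifferentiableAt ℝ f x)
    (hd2 : DifferentiableAt ℝ (fun y => fderiv ℝ f y v) p) :
    f p * fderiv ℝ (fun y => fderiv ℝ f y v) p v ≤ (1 - β) * fderiv ℝ f p v ^ 2 := by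
  set ℓ : ℝ →ᵃ[ℝ] E := lineMap p (p + v)
  have hdir : p + v - p = v := add_sub_cancel_left p v
  have hS : ℓ ⁻¹' U ∈ 𝓝 0 :=
    lineMap_continuous.continuousAt.preimage_mem_nhds (by simpa [ℓ] using hU.mem_nhds hp)
  have hm : ∀ s ∈ ℓ ⁻¹' U, HasDerivAt (fun r => f (ℓ r)) (fderiv ℝ f (ℓ s) v) s :=
    fun s hs => by simpa [hdir] using hasDerivAt_comp_lineMap (hd _ hs)
  have hm' : HasDerivAt (fun s => fderiv ℝ f (ℓ s) v)
      (fderiv ℝ (fun y => fderiv ℝ f y v) p v) 0 := by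
    simpa [hdir, ℓ] using
      hasDerivAt_comp_lineMap (a := p) (b := p + v) (s := 0) (by simpa using hd2)
  simpa [ℓ] using
    mul_le_of_concaveOn_rpow hβ hS (fun s hs => hpos _ hs) (hconc.comp_affineMap ℓ) hm hm'

lemma concaveOn_of_fderiv_fderiv_nonpos {Ω : Set E} {f : E → ℝ} (hΩo : IsOpen Ω)
    (hΩc : Convex ℝ Ω) (hd : ∀ x ∈ Ω, DifferentiableAt ℝ f x)
    (hd2 : ∀ x ∈ Ω, ∀ v, DifferentiableAt ℝ (fun y => fderiv ℝ f y v) x)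
    (h : ∀ x ∈ Ω, ∀ v, fderiv ℝ (fun y => fderiv ℝ f y v) x v ≤ 0) :
    ConcaveOn ℝ Ω f := by
  refine concaveOn_of_forall_concaveOn_lineMap hΩc fun x _ y _ => ?_
  set ℓ : ℝ →ᵃ[ℝ] E := lineMap x y
  have hS : IsOpen (ℓ ⁻¹' Ω) := hΩo.preimage lineMap_continuous
  have hf' : ∀ s ∈ ℓ ⁻¹' Ω, HasDerivAt (fun r => f (ℓ r)) (fderiv ℝ f (ℓ s) (y - x)) s :=
    fun s hs => hasDerivAt_comp_lineMap (hd _ hs)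
  have hf'' : ∀ s ∈ ℓ ⁻¹' Ω, HasDerivAt (deriv fun r => f (ℓ r))
      (fderiv ℝ (fun z => fderiv ℝ f z (y - x)) (ℓ s) (y - x)) s := fun s hs =>
    (hasDerivAt_comp_lineMap (hd2 _ hs _)).congr_of_eventuallyEq <|
      eventually_of_mem (hS.mem_nhds hs) fun r hr => (hf' r hr).deriv
  refine concaveOn_of_deriv2_nonpos' (hΩc.affine_preimage ℓ)
    (fun s hs => (hf' s hs).differentiableAt.differentiableWithinAt)
    (fun s hs => (hf'' s hs).differentiableAt.differentiableWithinAt) fun s hs => ?_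
  change deriv (deriv fun r => f (ℓ r)) s ≤ 0
  rw [(hf'' s hs).deriv]
  exact h _ hs _

lemma fderiv_fderiv_le_of_concaveOn_rpow_inv {Ω : Set E} {u : E → ℝ} {α t : ℝ} {p v : E}
    (hΩo : IsOpen Ω) (hα : -1 < α) (hud : ∀ x ∈ Ω, DifferentiableAt ℝ u x)
    (hud2 : DifferentiableAt ℝ (fun y => fderiv ℝ u y v) p)
    (hconc : ConcaveOn ℝ {q ∈ Ω | t < u q} fun q => ((1 + α) * (u q - t)) ^ (1 + α)⁻¹)
    (hp : p ∈ Ω) (ht : t < u p) :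
    fderiv ℝ (fun y => fderiv ℝ u y v) p v ≤ α / ((1 + α) * (u p - t)) * fderiv ℝ u p v ^ 2 := by
  have h1α : 0 < 1 + α := by linarith
  have hU : IsOpen {q ∈ Ω | t < u q} :=
    ContinuousOn.isOpen_inter_preimage (fun x hx => (hud x hx).continuousAt.continuousWithinAt)
      hΩo isOpen_Ioi
  have hcoef : ∀ y, fderiv ℝ (fun q => (1 + α) * (u q - t)) y v = (1 + α) * fderiv ℝ u y v :=
    fun y => by
      rw [show (fun q => (1 + α) * (u q - t)) = (1 + α) • fun q => u q - t from rfl,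
        fderiv_const_smul_field]
      simp [fderiv_sub_const]
  have key := mul_fderiv_fderiv_le_of_concaveOn_rpow (v := v) (inv_pos.2 h1α) hU ⟨hp, ht⟩
    (fun x hx => mul_pos h1α (sub_pos.2 hx.2)) hconc
    (fun x hx => ((hud x hx.1).sub_const t).const_mul _)
    (by simpa only [hcoef] using hud2.const_mul _)
  simp only [hcoef] at key
  rw [fderiv_const_mul hud2, smul_apply, smul_eq_mul] at key
  have hrhs : (1 - (1 + α)⁻¹) * ((1 + α) * fderiv ℝ u p v) ^ 2
      = (1 + α) * (α * fderiv ℝ u p v ^ 2) := by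
    field_simp
    ring
  rw [div_mul_eq_mul_div, le_div_iff₀ (mul_pos h1α (sub_pos.2 ht))]
  refine le_of_mul_le_mul_left ?_ h1α
  linarith

end Lines

theorem stmt19_general {n : ℕ}
    (Ω : Set (EuclideanSpace ℝ (Fin (n + 1))))
    (hΩo : IsOpen Ω) (hΩc : Convex ℝ Ω)
    (α : ℝ) (hα : 0 < α)
    (u : EuclideanSpace ℝ (Fin (n + 1)) → ℝ)
    (hud : ∀ x ∈ Ω, DifferentiableAt ℝ u x)
    (hud2 : ∀ x ∈ Ω, DifferentiableAt ℝ (fun y => fderiv ℝ u y) x)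
    (hconc : ∀ t : ℝ, ConcaveOn ℝ {q ∈ Ω | t < u q}
      (fun q => ((1 + α) * (u q - t)) ^ ((1 + α)⁻¹))) :
    (∀ p ∈ Ω, ∀ t < u p, ∀ v : EuclideanSpace ℝ (Fin (n + 1)),
      fderiv ℝ (fun y => fderiv ℝ u y v) p v
        ≤ α / ((1 + α) * (u p - t)) * (fderiv ℝ u p v) ^ 2) ∧
    (∀ p ∈ Ω, ∀ v : EuclideanSpace ℝ (Fin (n + 1)),
      fderiv ℝ (fun y => fderiv ℝ u y v) p v ≤ 0) ∧
    ConcaveOn ℝ Ω u := by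
  have hD2 : ∀ p ∈ Ω, ∀ v, DifferentiableAt ℝ (fun y => fderiv ℝ u y v) p :=
    fun p hp v => (hud2 p hp).clm_apply (differentiableAt_const v)
  have hbound : ∀ p ∈ Ω, ∀ t < u p, ∀ v : EuclideanSpace ℝ (Fin (n + 1)),
      fderiv ℝ (fun y => fderiv ℝ u y v) p v
        ≤ α / ((1 + α) * (u p - t)) * (fderiv ℝ u p v) ^ 2 := fun p hp t ht v =>
    fderiv_fderiv_le_of_concaveOn_rpow_inv hΩo (by linarith) hud (hD2 p hp v) (hconc t) hp ht
  have hnonpos : ∀ p ∈ Ω, ∀ v : EuclideanSpace ℝ (Fin (n + 1)),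
      fderiv ℝ (fun y => fderiv ℝ u y v) p v ≤ 0 := fun p hp v =>
    nonpos_of_forall_lt_le_div_mul (by linarith) fun t ht => hbound p hp t ht v
  exact ⟨hbound, hnonpos, concaveOn_of_fderiv_fderiv_nonpos hΩo hΩc hud hD2 hnonpos⟩

/-- Second part of Theorem 3: if `w_t = ((1+α)(u-t))^{1/(1+α)}` is concave on
`{u > t}` for every `t`, and the superlevel sets of `u` are bounded, then for
every `p` and `t < u(p)` one has
`D²u(p) ≤ α/((1+α)(u(p)-t)) Du(p) ⊗ Du(p)`, hence `D²u(p) ≤ 0` and `u` is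
concave. -/
theorem stmt19 {n : ℕ}
    (Ω : Set (EuclideanSpace ℝ (Fin (n + 1))))
    (hΩo : IsOpen Ω) (hΩc : Convex ℝ Ω)
    (α : ℝ) (hα : 0 < α)
    (u : EuclideanSpace ℝ (Fin (n + 1)) → ℝ)
    (hud : ∀ x ∈ Ω, DifferentiableAt ℝ u x)
    (hud2 : ∀ x ∈ Ω, DifferentiableAt ℝ (fun y => fderiv ℝ u y) x)
    (hbdd : ∀ t : ℝ, IsBounded {q ∈ Ω | t < u q})
    (hconc : ∀ t : ℝ, ConcaveOn ℝ {q ∈ Ω | t < u q}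
      (fun q => ((1 + α) * (u q - t)) ^ ((1 + α)⁻¹))) :
    (∀ p ∈ Ω, ∀ t < u p, ∀ v : EuclideanSpace ℝ (Fin (n + 1)),
      fderiv ℝ (fun y => fderiv ℝ u y v) p v
        ≤ α / ((1 + α) * (u p - t)) * (fderiv ℝ u p v) ^ 2) ∧
    (∀ p ∈ Ω, ∀ v : EuclideanSpace ℝ (Fin (n + 1)),
      fderiv ℝ (fun y => fderiv ℝ u y v) p v ≤ 0) ∧
    ConcaveOn ℝ Ω u :=
  stmt19_general Ω hΩo hΩc α hα u hud hud2 hconc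
end
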